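/- The aggregation subspace $\mathcal{G}(\mathbf{y})$, the set of all $L^2$-limits $\lim_n a_n^\top \mathbf{y}$ over averaging sequences $(a_n)$, is a closed linear subspace of the Hilbert space $H(\mathbf{y})$. -/

import Mathlib

open Filter MeasureTheory

/-- The aggregation subspace `𝒢(y)`: the set of all `L²`-limits `z = limₙ aₙ⊤y`
where `(aₙ)` is an averaging sequence (`aₙ ∈ ℓ² ∩ ℓ²(Σ)`, `‖aₙ‖₂ → 0`), each
`aₙ⊤y` being defined as the `L²`-limit `s n` of the partial sums. -/
def aggregationSet {Ω : Type*} [MeasurableSpace Ω] {μ : Measure Ω}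
    (y : ℕ → Lp ℝ 2 μ) : Set (Lp ℝ 2 μ) :=
  {z | ∃ (a : ℕ → ℕ → ℝ) (s : ℕ → Lp ℝ 2 μ),
    (∀ n, Memℓp (a n) 2) ∧
    Tendsto (fun n => ∑' k, (a n k) ^ 2) atTop (nhds 0) ∧
    (∀ n, Tendsto (fun N => ∑ k ∈ Finset.range N, a n k • y k) atTop (nhds (s n))) ∧
    Tendsto s atTop (nhds z)}

/-!
Averaging weights are closed under sums and scalar multiples because `(a + b)² ≤ 2a² + 2b²`,
which makes `𝒢(y)` a submodule. For closedness, record each aggregate `a⊤y` together with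
its weight energy `∑ aₖ²`: a point `z` lies in `𝒢(y)` exactly when `(z, 0)` is a limit of such
pairs, so `𝒢(y)` is the preimage of a closure under the continuous map `z ↦ (z, 0)`. Every
aggregate is a limit of finite combinations of the `yₖ`, hence lies in `H(y)`.
-/

open Topology

lemma Memℓp.summable_sq {f : ℕ → ℝ} (hf : Memℓp f 2) : Summable fun k => f k ^ 2 := by
  simpa only [ENNReal.toReal_ofNat, Real.rpow_two, Real.norm_eq_abs, sq_abs] using
    hf.summable (p := 2) (by norm_num)

lemma tsum_add_sq_le {f g : ℕ → ℝ} (hf : Summable fun k => f k ^ 2)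
    (hg : Summable fun k => g k ^ 2) :
    ∑' k, (f k + g k) ^ 2 ≤ 2 * ∑' k, f k ^ 2 + 2 * ∑' k, g k ^ 2 := by
  have hle : ∀ k, (f k + g k) ^ 2 ≤ 2 * f k ^ 2 + 2 * g k ^ 2 := fun k => by
    nlinarith [sq_nonneg (f k - g k)]
  have hfg : Summable fun k => 2 * f k ^ 2 + 2 * g k ^ 2 := (hf.mul_left 2).add (hg.mul_left 2)
  calc ∑' k, (f k + g k) ^ 2
      ≤ ∑' k, (2 * f k ^ 2 + 2 * g k ^ 2) :=
        (hfg.of_nonneg_of_le (fun k => sq_nonneg _) hle).tsum_le_tsum hle hfg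
    _ = 2 * ∑' k, f k ^ 2 + 2 * ∑' k, g k ^ 2 := by
        rw [(hf.mul_left 2).tsum_add (hg.mul_left 2), tsum_mul_left, tsum_mul_left]

section AveragingWeights

variable {a b : ℕ → ℕ → ℝ}

lemma tendsto_tsum_add_sq (ha : ∀ n, Memℓp (a n) 2) (hb : ∀ n, Memℓp (b n) 2)
    (ha₀ : Tendsto (fun n => ∑' k, a n k ^ 2) atTop (𝓝 0))
    (hb₀ : Tendsto (fun n => ∑' k, b n k ^ 2) atTop (𝓝 0)) :
    Tendsto (fun n => ∑' k, (a n k + b n k) ^ 2) atTop (𝓝 0) := by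
  have hbound : Tendsto (fun n => 2 * ∑' k, a n k ^ 2 + 2 * ∑' k, b n k ^ 2) atTop (𝓝 0) := by
    simpa using (ha₀.const_mul 2).add (hb₀.const_mul 2)
  exact squeeze_zero (fun n => tsum_nonneg fun k => sq_nonneg _)
    (fun n => tsum_add_sq_le (ha n).summable_sq (hb n).summable_sq) hbound

lemma tendsto_tsum_const_mul_sq (c : ℝ) (ha₀ : Tendsto (fun n => ∑' k, a n k ^ 2) atTop (𝓝 0)) :
    Tendsto (fun n => ∑' k, (c * a n k) ^ 2) atTop (𝓝 0) := by
  simpa [mul_pow, tsum_mul_left] using ha₀.const_mul (c ^ 2)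

end AveragingWeights

section Aggregation

variable {E : Type*} [AddCommGroup E] [Module ℝ E] [TopologicalSpace E]
  [ContinuousAdd E] [ContinuousConstSMul ℝ E]

/-- `aggregationSet`, for an arbitrary topological vector space in place of `L²`. -/
def aggregationSubmodule (y : ℕ → E) : Submodule ℝ E where
  carrier := {z | ∃ (a : ℕ → ℕ → ℝ) (s : ℕ → E),
    (∀ n, Memℓp (a n) 2) ∧
    Tendsto (fun n => ∑' k, (a n k) ^ 2) atTop (nhds 0) ∧
    (∀ n, Tendsto (fun N => ∑ k ∈ Finset.range N, a n k • y k) atTop (nhds (s n))) ∧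
    Tendsto s atTop (nhds z)}
  zero_mem' := ⟨0, 0, fun _ => zero_memℓp, by simp,
    fun _ => by simpa using tendsto_const_nhds, tendsto_const_nhds⟩
  add_mem' := by
    rintro z w ⟨a, s, ha, ha₀, has, hs⟩ ⟨b, t, hb, hb₀, hbt, ht⟩
    refine ⟨a + b, s + t, fun n => (ha n).add (hb n), tendsto_tsum_add_sq ha hb ha₀ hb₀,
      fun n => ?_, hs.add ht⟩
    simpa only [Pi.add_apply, add_smul, Finset.sum_add_distrib] using (has n).add (hbt n)
  smul_mem' := by
    rintro c z ⟨a, s, ha, ha₀, has, hs⟩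
    refine ⟨fun n k => c * a n k, fun n => c • s n, fun n => (ha n).const_smul c,
      tendsto_tsum_const_mul_sq c ha₀, fun n => ?_, hs.const_smul c⟩
    simpa only [mul_smul, ← Finset.smul_sum] using (has n).const_smul c

def aggregateEnergyPairs (y : ℕ → E) : Set (E × ℝ) :=
  {p | ∃ a : ℕ → ℝ, Memℓp a 2 ∧
    Tendsto (fun N => ∑ k ∈ Finset.range N, a k • y k) atTop (𝓝 p.1) ∧ ∑' k, a k ^ 2 = p.2}

lemma coe_aggregationSubmodule [FirstCountableTopology E] (y : ℕ → E) :
    (aggregationSubmodule y : Set E) =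
      (fun z => (z, (0 : ℝ))) ⁻¹' closure (aggregateEnergyPairs y) := by
  ext z
  constructor
  · rintro ⟨a, s, ha, ha₀, has, hs⟩
    exact mem_closure_of_tendsto (hs.prodMk_nhds ha₀)
      (Eventually.of_forall fun n => ⟨a n, ha n, has n, rfl⟩)
  · intro hz
    obtain ⟨p, hp, hpz⟩ := mem_closure_iff_seq_limit.mp hz
    choose a ha has hsq using hp
    refine ⟨a, fun n => (p n).1, ha, ?_, has, hpz.fst_nhds⟩
    simpa only [hsq] using hpz.snd_nhds

lemma isClosed_aggregationSubmodule [FirstCountableTopology E] (y : ℕ → E) :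
    IsClosed (aggregationSubmodule y : Set E) := by
  rw [coe_aggregationSubmodule]
  exact isClosed_closure.preimage (by fun_prop)

lemma aggregationSubmodule_le_topologicalClosure_span (y : ℕ → E) :
    aggregationSubmodule y ≤ (Submodule.span ℝ (Set.range y)).topologicalClosure := by
  rintro z ⟨a, s, -, -, has, hs⟩
  have partialSum_mem (n N : ℕ) :
      ∑ k ∈ Finset.range N, a n k • y k ∈ Submodule.span ℝ (Set.range y) :=
    Submodule.sum_mem _ fun k _ => Submodule.smul_mem _ _ (Submodule.subset_span ⟨k, rfl⟩)
  have hs_mem (n : ℕ) : s n ∈ (Submodule.span ℝ (Set.range y)).topologicalClosure :=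
    mem_closure_of_tendsto (has n) (Eventually.of_forall (partialSum_mem n))
  exact (Submodule.isClosed_topologicalClosure _).mem_of_tendsto hs (Eventually.of_forall hs_mem)

end Aggregation

theorem aggregation_closed_subspace_general
    {Ω : Type*} [MeasurableSpace Ω] (μ : Measure Ω)
    (y : ℕ → Lp ℝ 2 μ) :
    ∃ S : Submodule ℝ (Lp ℝ 2 μ),
      (S : Set (Lp ℝ 2 μ)) = aggregationSet y ∧
      IsClosed (S : Set (Lp ℝ 2 μ)) ∧
      S ≤ (Submodule.span ℝ (Set.range y)).topologicalClosure :=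
  ⟨aggregationSubmodule y, rfl, isClosed_aggregationSubmodule y,
    aggregationSubmodule_le_topologicalClosure_span y⟩

/-- the aggregation subspace `𝒢(y)` is a closed linear subspace of the
Hilbert space `H(y)` (the closed linear span of the components of `y` in `L²`). -/
theorem aggregation_closed_subspace
    {Ω : Type*} [MeasurableSpace Ω] (μ : Measure Ω) [IsProbabilityMeasure μ]
    (y : ℕ → Lp ℝ 2 μ)
    (hmean : ∀ k, ∫ ω, (y k : Ω → ℝ) ω ∂μ = 0) :
    ∃ S : Submodule ℝ (Lp ℝ 2 μ),
      (S : Set (Lp ℝ 2 μ)) = aggregationSet y ∧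
      IsClosed (S : Set (Lp ℝ 2 μ)) ∧
      S ≤ (Submodule.span ℝ (Set.range y)).topologicalClosure :=
  aggregation_closed_subspace_general μ y
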